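/- The matching map ψ is a bijection from the set of clique vectors for H onto the set of matchings of W(H). In particular, for every clique vector v, the set of edges ψ(v) is a matching of W(H). -/

import Mathlib

open Finset Filter Pointwise

/-- Neighbors in the right shore `T` of a left vertex `i`. -/
def Nbr (E : Finset (ℕ × ℕ)) (i : ℕ) : Finset ℕ :=
  (E.filter (fun p => p.1 = i)).image Prod.snd

/-- Neighbors in the left shore `S` of a right vertex `j`. -/
def Nbr' (E : Finset (ℕ × ℕ)) (j : ℕ) : Finset ℕ :=
  (E.filter (fun p => p.2 = j)).image Prod.fst

/-- A clique vector `(f, g, s)` for the bipartite graph `H`; values outside the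
domains are normalized (to `0`, resp. `false`). -/
structure CliqueVec (n m : ℕ) (E : Finset (ℕ × ℕ)) where
  f : ℕ → ℕ
  g : ℕ → ℕ
  s : ℕ × ℕ → Bool
  hf : ∀ i ∈ Finset.Icc 1 n, (i, f i) ∈ E
  hg : ∀ j ∈ Finset.Icc 1 m, (g j, j) ∈ E
  hs : ∀ p ∈ E, s p = true → f p.1 = p.2 ∧ g p.2 = p.1
  hf' : ∀ i ∉ Finset.Icc 1 n, f i = 0
  hg' : ∀ j ∉ Finset.Icc 1 m, g j = 0
  hs' : ∀ p ∉ E, s p = false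

/-- Edges of the almost-degree-whiskered graph `W(H)`:
`Sum.inl (i,j)` is the edge `{i,j}` of `H`;
`Sum.inr (Sum.inl (i,j))` is the pendant edge `{i, w_{i,j}}`;
`Sum.inr (Sum.inr (j,i))` is the pendant edge `{j, w'_{j,i}}`. -/
abbrev WEdge : Type := (ℕ × ℕ) ⊕ ((ℕ × ℕ) ⊕ (ℕ × ℕ))

def IsWEdge (E : Finset (ℕ × ℕ)) : WEdge → Prop
  | Sum.inl p => p ∈ E
  | Sum.inr (Sum.inl p) => p ∈ E ∧ ∃ j' ∈ Nbr E p.1, j' < p.2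
  | Sum.inr (Sum.inr q) => (q.2, q.1) ∈ E ∧ ∃ i' ∈ Nbr' E q.1, q.2 < i'

/-- The `H`-vertex of the left shore covered by an edge of `W(H)`, if any. -/
def leftV : WEdge → Option ℕ
  | Sum.inl p => some p.1
  | Sum.inr (Sum.inl p) => some p.1
  | Sum.inr (Sum.inr _) => none

/-- The `H`-vertex of the right shore covered by an edge of `W(H)`, if any. -/
def rightV : WEdge → Option ℕ
  | Sum.inl p => some p.2
  | Sum.inr (Sum.inl _) => none
  | Sum.inr (Sum.inr q) => some q.1

/-- A matching of `W(H)`: a set of pairwise disjoint edges of `W(H)`.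
(Leaf vertices are covered by at most one edge label automatically.) -/
def IsMatching (E : Finset (ℕ × ℕ)) (M : Set WEdge) : Prop :=
  (∀ e ∈ M, IsWEdge E e) ∧
  ∀ e ∈ M, ∀ e' ∈ M, e ≠ e' →
    (leftV e = none ∨ leftV e ≠ leftV e') ∧
    (rightV e = none ∨ rightV e ≠ rightV e')

/-- `mCount E k` is `m_k`, the number of `k`-matchings of `W(H)`. -/
noncomputable def mCount (E : Finset (ℕ × ℕ)) (k : ℕ) : ℕ :=
  {M : Set WEdge | IsMatching E M ∧ M.ncard = k}.ncard

/-- The matching map `ψ`. -/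
def psi {n m : ℕ} {E : Finset (ℕ × ℕ)} (v : CliqueVec n m E) : Set WEdge :=
  { e | (∃ i ∈ Finset.Icc 1 n, v.g (v.f i) ≠ i ∧ (∃ j' ∈ Nbr E i, j' < v.f i) ∧
          e = Sum.inr (Sum.inl (i, v.f i))) ∨
        (∃ j ∈ Finset.Icc 1 m, v.f (v.g j) ≠ j ∧ (∃ i' ∈ Nbr' E j, v.g j < i') ∧
          e = Sum.inr (Sum.inr (j, v.g j))) ∨
        (∃ p ∈ E, v.f p.1 = p.2 ∧ v.g p.2 = p.1 ∧ v.s p = false ∧ e = Sum.inl p) ∨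
        (∃ p ∈ E, v.f p.1 = p.2 ∧ v.g p.2 = p.1 ∧ v.s p = true ∧
          (((∃ j' ∈ Nbr E p.1, j' < p.2) ∧ e = Sum.inr (Sum.inl p)) ∨
           ((∃ i' ∈ Nbr' E p.2, p.1 < i') ∧ e = Sum.inr (Sum.inr (p.2, p.1))))) }


/-! ψ has an explicit inverse. In `ψ(v)` a vertex `i ∈ S` is covered by at most one edge, and
that edge points to `f(i)`: it is `{i, f(i)}` or the leaf edge `{i, w_{i,f(i)}}`; `i` is left
uncovered exactly when `f(i) = min N(i)` and `{i, f(i)}` is not taken. So a matching `M` determines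
`f(i)` as the vertex towards which `M` covers `i`, defaulting to `min N(i)`; dually `g(j)`,
defaulting to `max N(j)`; and `s(i,j) = +` exactly when `f(i) = j` and `g(j) = i` but
`{i, j} ∉ M`. -/

section Neighbors

variable {E : Finset (ℕ × ℕ)} {i j : ℕ}

lemma mem_Nbr : j ∈ Nbr E i ↔ (i, j) ∈ E := by
  simp [Nbr]

lemma mem_Nbr' : i ∈ Nbr' E j ↔ (i, j) ∈ E := by
  simp [Nbr']

end Neighbors

section Matching

variable {E : Finset (ℕ × ℕ)} {M : Set WEdge}

lemma isMatching_iff : IsMatching E M ↔ (∀ e ∈ M, IsWEdge E e) ∧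
    (∀ e ∈ M, ∀ e' ∈ M, ∀ i, leftV e = some i → leftV e' = some i → e = e') ∧
    (∀ e ∈ M, ∀ e' ∈ M, ∀ j, rightV e = some j → rightV e' = some j → e = e') := by
  refine and_congr_right fun _ => ⟨fun h => ⟨?_, ?_⟩, fun ⟨hl, hr⟩ e he e' he' hne => ⟨?_, ?_⟩⟩
  · intro e he e' he' i hi hi'
    by_contra hne
    rcases (h e he e' he' hne).1 with h1 | h1 <;> simp_all
  · intro e he e' he' j hj hj'
    by_contra hne
    rcases (h e he e' he' hne).2 with h1 | h1 <;> simp_all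
  · cases hi : leftV e with
    | none => exact Or.inl rfl
    | some i => exact Or.inr fun hi' => hne (hl e he e' he' i hi hi'.symm)
  · cases hj : rightV e with
    | none => exact Or.inl rfl
    | some j => exact Or.inr fun hj' => hne (hr e he e' he' j hj hj'.symm)

def CoversLeftVia (M : Set WEdge) (i j : ℕ) : Prop :=
  Sum.inl (i, j) ∈ M ∨ Sum.inr (Sum.inl (i, j)) ∈ M

def CoversRightVia (M : Set WEdge) (j i : ℕ) : Prop :=
  Sum.inl (i, j) ∈ M ∨ Sum.inr (Sum.inr (j, i)) ∈ M

lemma IsMatching.mem_of_coversLeftVia (hM : IsMatching E M) {i j : ℕ}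
    (h : CoversLeftVia M i j) : (i, j) ∈ E := by
  rcases h with h | h
  exacts [hM.1 _ h, (hM.1 _ h).1]

lemma IsMatching.mem_of_coversRightVia (hM : IsMatching E M) {i j : ℕ}
    (h : CoversRightVia M j i) : (i, j) ∈ E := by
  rcases h with h | h
  exacts [hM.1 _ h, (hM.1 _ h).1]

lemma IsMatching.coversLeftVia_unique (hM : IsMatching E M) {i j j' : ℕ}
    (h : CoversLeftVia M i j) (h' : CoversLeftVia M i j') : j = j' := by
  have hl := (isMatching_iff.mp hM).2.1
  rcases h with h | h <;> rcases h' with h' | h' <;>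
    simpa [leftV] using hl _ h _ h' i rfl rfl

lemma IsMatching.coversRightVia_unique (hM : IsMatching E M) {j i i' : ℕ}
    (h : CoversRightVia M j i) (h' : CoversRightVia M j i') : i = i' := by
  have hr := (isMatching_iff.mp hM).2.2
  rcases h with h | h <;> rcases h' with h' | h' <;>
    simpa [rightV] using hr _ h _ h' j rfl rfl

end Matching

namespace CliqueVec

variable {n m : ℕ} {E : Finset (ℕ × ℕ)}

lemma ext {v w : CliqueVec n m E} (hf : v.f = w.f) (hg : v.g = w.g) (hs : v.s = w.s) :
    v = w := by
  cases v; cases w; subst hf hg hs; rfl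

variable (v : CliqueVec n m E) {a b : ℕ}

lemma inl_mem_psi_iff :
    Sum.inl (a, b) ∈ psi v ↔ (a, b) ∈ E ∧ v.f a = b ∧ v.g b = a ∧ v.s (a, b) = false := by
  simp only [psi, Set.mem_ofPred_eq]
  aesop

lemma inr_inl_mem_psi_iff (hE : E ⊆ Icc 1 n ×ˢ Icc 1 m) :
    Sum.inr (Sum.inl (a, b)) ∈ psi v ↔ (a, b) ∈ E ∧ v.f a = b ∧ (∃ j' ∈ Nbr E a, j' < b) ∧
      (v.g b = a → v.s (a, b) = true) := by
  constructor
  · rintro (⟨i, hi, hgi, hlt, he⟩ | ⟨_, _, _, _, he⟩ | ⟨_, _, _, _, _, he⟩ |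
      ⟨p, hp, hf, -, hs, ⟨hlt, he⟩ | ⟨_, he⟩⟩) <;>
      simp only [Sum.inr.injEq, Sum.inl.injEq, reduceCtorEq] at he
    · obtain ⟨rfl, rfl⟩ := Prod.mk.inj he
      exact ⟨v.hf a hi, rfl, hlt, fun h => absurd h hgi⟩
    · subst he
      exact ⟨hp, hf, hlt, fun _ => hs⟩
  · rintro ⟨hab, rfl, hlt, hs⟩
    by_cases hg : v.g (v.f a) = a
    · exact Or.inr (Or.inr (Or.inr ⟨(a, v.f a), hab, rfl, hg, hs hg, Or.inl ⟨hlt, rfl⟩⟩))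
    · exact Or.inl ⟨a, (mem_product.1 (hE hab)).1, hg, hlt, rfl⟩

lemma inr_inr_mem_psi_iff (hE : E ⊆ Icc 1 n ×ˢ Icc 1 m) :
    Sum.inr (Sum.inr (b, a)) ∈ psi v ↔ (a, b) ∈ E ∧ v.g b = a ∧ (∃ i' ∈ Nbr' E b, a < i') ∧
      (v.f a = b → v.s (a, b) = true) := by
  constructor
  · rintro (⟨_, _, _, _, he⟩ | ⟨j, hj, hfj, hlt, he⟩ | ⟨_, _, _, _, _, he⟩ |
      ⟨p, hp, -, hg, hs, ⟨_, he⟩ | ⟨hlt, he⟩⟩) <;>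
      simp only [Sum.inr.injEq, reduceCtorEq] at he
    · obtain ⟨rfl, rfl⟩ := Prod.mk.inj he
      exact ⟨v.hg b hj, rfl, hlt, fun h => absurd h hfj⟩
    · obtain ⟨rfl, rfl⟩ := Prod.mk.inj he
      exact ⟨hp, hg, hlt, fun _ => hs⟩
  · rintro ⟨hab, rfl, hlt, hs⟩
    by_cases hf : v.f (v.g b) = b
    · exact Or.inr (Or.inr (Or.inr ⟨(v.g b, b), hab, hf, rfl, hs hf, Or.inr ⟨hlt, rfl⟩⟩))
    · exact Or.inr (Or.inl ⟨b, (mem_product.1 (hE hab)).2, hf, hlt, rfl⟩)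

variable {v}

lemma eq_of_mem_psi_of_leftV (hE : E ⊆ Icc 1 n ×ˢ Icc 1 m) {e : WEdge} {i : ℕ}
    (he : e ∈ psi v) (hi : leftV e = some i) :
    e = if v.g (v.f i) = i ∧ v.s (i, v.f i) = false then Sum.inl (i, v.f i)
      else Sum.inr (Sum.inl (i, v.f i)) := by
  rcases e with ⟨a, b⟩ | ⟨a, b⟩ | ⟨b, a⟩ <;>
    simp only [leftV, Option.some.injEq, reduceCtorEq] at hi
  all_goals subst hi
  · obtain ⟨-, rfl, hg, hs⟩ := v.inl_mem_psi_iff.1 he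
    simp [hg, hs]
  · obtain ⟨-, rfl, -, hs⟩ := (v.inr_inl_mem_psi_iff hE).1 he
    grind

lemma eq_of_mem_psi_of_rightV (hE : E ⊆ Icc 1 n ×ˢ Icc 1 m) {e : WEdge} {j : ℕ}
    (he : e ∈ psi v) (hj : rightV e = some j) :
    e = if v.f (v.g j) = j ∧ v.s (v.g j, j) = false then Sum.inl (v.g j, j)
      else Sum.inr (Sum.inr (j, v.g j)) := by
  rcases e with ⟨a, b⟩ | ⟨a, b⟩ | ⟨b, a⟩ <;>
    simp only [rightV, Option.some.injEq, reduceCtorEq] at hj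
  all_goals subst hj
  · obtain ⟨-, hf, rfl, hs⟩ := v.inl_mem_psi_iff.1 he
    simp [hf, hs]
  · obtain ⟨-, rfl, -, hs⟩ := (v.inr_inr_mem_psi_iff hE).1 he
    grind

lemma psi_isMatching (hE : E ⊆ Icc 1 n ×ˢ Icc 1 m) :
    IsMatching E (psi v) := by
  refine isMatching_iff.2 ⟨?_, fun e he e' he' i hi hi' => ?_, fun e he e' he' j hj hj' => ?_⟩
  · rintro (⟨a, b⟩ | ⟨a, b⟩ | ⟨b, a⟩) he
    · exact (v.inl_mem_psi_iff.1 he).1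
    · obtain ⟨hab, -, hlt, -⟩ := (v.inr_inl_mem_psi_iff hE).1 he
      exact ⟨hab, hlt⟩
    · obtain ⟨hab, -, hlt, -⟩ := (v.inr_inr_mem_psi_iff hE).1 he
      exact ⟨hab, hlt⟩
  · rw [eq_of_mem_psi_of_leftV hE he hi, eq_of_mem_psi_of_leftV hE he' hi']
  · rw [eq_of_mem_psi_of_rightV hE he hj, eq_of_mem_psi_of_rightV hE he' hj']

lemma f_eq_of_coversLeftVia_psi (hE : E ⊆ Icc 1 n ×ˢ Icc 1 m)
    {i j : ℕ} (h : CoversLeftVia (psi v) i j) : v.f i = j := by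
  rcases h with h | h
  exacts [(v.inl_mem_psi_iff.1 h).2.1, ((v.inr_inl_mem_psi_iff hE).1 h).2.1]

lemma g_eq_of_coversRightVia_psi (hE : E ⊆ Icc 1 n ×ˢ Icc 1 m)
    {i j : ℕ} (h : CoversRightVia (psi v) j i) : v.g j = i := by
  rcases h with h | h
  exacts [(v.inl_mem_psi_iff.1 h).2.2.1, ((v.inr_inr_mem_psi_iff hE).1 h).2.1]

lemma coversLeftVia_psi (hE : E ⊆ Icc 1 n ×ˢ Icc 1 m) {i : ℕ}
    (hi : i ∈ Icc 1 n) (hlt : ∃ j' ∈ Nbr E i, j' < v.f i) : CoversLeftVia (psi v) i (v.f i) := by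
  by_cases h : v.g (v.f i) = i ∧ v.s (i, v.f i) = false
  · exact Or.inl (v.inl_mem_psi_iff.2 ⟨v.hf i hi, rfl, h⟩)
  · exact Or.inr ((v.inr_inl_mem_psi_iff hE).2 ⟨v.hf i hi, rfl, hlt, by simpa using h⟩)

lemma coversRightVia_psi (hE : E ⊆ Icc 1 n ×ˢ Icc 1 m) {j : ℕ}
    (hj : j ∈ Icc 1 m) (hlt : ∃ i' ∈ Nbr' E j, v.g j < i') :
    CoversRightVia (psi v) j (v.g j) := by
  by_cases h : v.f (v.g j) = j ∧ v.s (v.g j, j) = false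
  · exact Or.inl (v.inl_mem_psi_iff.2 ⟨v.hg j hj, h.1, rfl, h.2⟩)
  · exact Or.inr ((v.inr_inr_mem_psi_iff hE).2 ⟨v.hg j hj, rfl, hlt, by simpa using h⟩)

lemma s_eq_true_iff {a b : ℕ} (hab : (a, b) ∈ E) :
    v.s (a, b) = true ↔ v.f a = b ∧ v.g b = a ∧ Sum.inl (a, b) ∉ psi v := by
  have := v.hs _ hab
  rw [inl_mem_psi_iff]
  aesop

end CliqueVec

section PickOr

variable {α : Type*} {s : Finset α} {P : α → Prop} {d : α}

open Classical in
noncomputable def pickOr (s : Finset α) (P : α → Prop) (d : α) : α :=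
  if h : ∃ x ∈ s, P x then h.choose else d

lemma pickOr_mem (hd : d ∈ s) : pickOr s P d ∈ s := by
  unfold pickOr
  split_ifs with h
  exacts [h.choose_spec.1, hd]

lemma pickOr_spec (h : ∃ x ∈ s, P x) : P (pickOr s P d) := by
  rw [pickOr, dif_pos h]
  exact h.choose_spec.2

lemma pickOr_of_forall_not (h : ∀ x, ¬P x) : pickOr s P d = d :=
  dif_neg fun ⟨x, _, hx⟩ => h x hx

end PickOr

section Partner

variable {n m : ℕ} {E : Finset (ℕ × ℕ)} {M : Set WEdge} {i j : ℕ}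

noncomputable def partnerLeft (hS : ∀ i ∈ Icc 1 n, (Nbr E i).Nonempty) (M : Set WEdge)
    (i : ℕ) : ℕ :=
  if hi : i ∈ Icc 1 n then pickOr (Nbr E i) (CoversLeftVia M i) ((Nbr E i).min' (hS i hi))
  else 0

noncomputable def partnerRight (hT : ∀ j ∈ Icc 1 m, (Nbr' E j).Nonempty) (M : Set WEdge)
    (j : ℕ) : ℕ :=
  if hj : j ∈ Icc 1 m then pickOr (Nbr' E j) (CoversRightVia M j) ((Nbr' E j).max' (hT j hj))
  else 0

variable (hS : ∀ i ∈ Icc 1 n, (Nbr E i).Nonempty) (hT : ∀ j ∈ Icc 1 m, (Nbr' E j).Nonempty)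

lemma partnerLeft_mem (hi : i ∈ Icc 1 n) : (i, partnerLeft hS M i) ∈ E := by
  rw [partnerLeft, dif_pos hi, ← mem_Nbr]
  exact pickOr_mem (min'_mem _ _)

lemma partnerRight_mem (hj : j ∈ Icc 1 m) : (partnerRight hT M j, j) ∈ E := by
  rw [partnerRight, dif_pos hj, ← mem_Nbr']
  exact pickOr_mem (max'_mem _ _)

lemma partnerLeft_of_notMem (hi : i ∉ Icc 1 n) : partnerLeft hS M i = 0 :=
  dif_neg hi

lemma partnerRight_of_notMem (hj : j ∉ Icc 1 m) : partnerRight hT M j = 0 :=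
  dif_neg hj

lemma partnerLeft_eq (hE : E ⊆ Icc 1 n ×ˢ Icc 1 m)
    (hM : IsMatching E M) (h : CoversLeftVia M i j) : partnerLeft hS M i = j := by
  have hij := hM.mem_of_coversLeftVia h
  rw [partnerLeft, dif_pos ((mem_product.1 (hE hij)).1)]
  exact hM.coversLeftVia_unique (pickOr_spec ⟨j, mem_Nbr.2 hij, h⟩) h

lemma partnerRight_eq (hE : E ⊆ Icc 1 n ×ˢ Icc 1 m)
    (hM : IsMatching E M) (h : CoversRightVia M j i) : partnerRight hT M j = i := by
  have hij := hM.mem_of_coversRightVia h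
  rw [partnerRight, dif_pos ((mem_product.1 (hE hij)).2)]
  exact hM.coversRightVia_unique (pickOr_spec ⟨i, mem_Nbr'.2 hij, h⟩) h

lemma partnerLeft_eq_min' (hi : i ∈ Icc 1 n) (h : ∀ j, ¬CoversLeftVia M i j) :
    partnerLeft hS M i = (Nbr E i).min' (hS i hi) := by
  rw [partnerLeft, dif_pos hi, pickOr_of_forall_not h]

lemma partnerRight_eq_max' (hj : j ∈ Icc 1 m) (h : ∀ i, ¬CoversRightVia M j i) :
    partnerRight hT M j = (Nbr' E j).max' (hT j hj) := by
  rw [partnerRight, dif_pos hj, pickOr_of_forall_not h]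

end Partner

namespace CliqueVec

variable {n m : ℕ} {E : Finset (ℕ × ℕ)} {M : Set WEdge}
  (hS : ∀ i ∈ Icc 1 n, (Nbr E i).Nonempty) (hT : ∀ j ∈ Icc 1 m, (Nbr' E j).Nonempty)

open Classical in
noncomputable def ofMatching (M : Set WEdge) : CliqueVec n m E where
  f := partnerLeft hS M
  g := partnerRight hT M
  s p := decide (p ∈ E ∧ partnerLeft hS M p.1 = p.2 ∧ partnerRight hT M p.2 = p.1 ∧ Sum.inl p ∉ M)
  hf _ := partnerLeft_mem hS
  hg _ := partnerRight_mem hT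
  hs _ _ h := by
    simp only [decide_eq_true_eq] at h
    exact ⟨h.2.1, h.2.2.1⟩
  hf' _ := partnerLeft_of_notMem hS
  hg' _ := partnerRight_of_notMem hT
  hs' _ hp := by simp [hp]

open Classical in
lemma ofMatching_s_eq_true_iff {a b : ℕ} :
    (ofMatching hS hT M).s (a, b) = true ↔ (a, b) ∈ E ∧ partnerLeft hS M a = b ∧
      partnerRight hT M b = a ∧ Sum.inl (a, b) ∉ M :=
  decide_eq_true_iff

variable (v : CliqueVec n m E)

lemma partnerLeft_psi (hE : E ⊆ Icc 1 n ×ˢ Icc 1 m) (i : ℕ) :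
    partnerLeft hS (psi v) i = v.f i := by
  by_cases hi : i ∈ Icc 1 n
  swap
  · rw [partnerLeft_of_notMem hS hi, v.hf' i hi]
  by_cases hc : ∃ j, CoversLeftVia (psi v) i j
  · obtain ⟨j, hj⟩ := hc
    rw [partnerLeft_eq hS hE (v.psi_isMatching hE) hj, v.f_eq_of_coversLeftVia_psi hE hj]
  rw [partnerLeft_eq_min' hS hi (not_exists.1 hc)]
  refine le_antisymm (min'_le _ _ (mem_Nbr.2 (v.hf i hi))) (le_min' _ _ _ fun j hj => ?_)
  by_contra! hlt
  exact hc ⟨_, v.coversLeftVia_psi hE hi ⟨j, hj, hlt⟩⟩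

lemma partnerRight_psi (hE : E ⊆ Icc 1 n ×ˢ Icc 1 m) (j : ℕ) :
    partnerRight hT (psi v) j = v.g j := by
  by_cases hj : j ∈ Icc 1 m
  swap
  · rw [partnerRight_of_notMem hT hj, v.hg' j hj]
  by_cases hc : ∃ i, CoversRightVia (psi v) j i
  · obtain ⟨i, hi⟩ := hc
    rw [partnerRight_eq hT hE (v.psi_isMatching hE) hi, v.g_eq_of_coversRightVia_psi hE hi]
  rw [partnerRight_eq_max' hT hj (not_exists.1 hc)]
  refine le_antisymm (max'_le _ _ _ fun i hi => ?_) (le_max' _ _ (mem_Nbr'.2 (v.hg j hj)))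
  by_contra! hlt
  exact hc ⟨_, v.coversRightVia_psi hE hj ⟨i, hi, hlt⟩⟩

lemma ofMatching_psi (hE : E ⊆ Icc 1 n ×ˢ Icc 1 m) : ofMatching hS hT (psi v) = v := by
  have hf : partnerLeft hS (psi v) = v.f := funext (partnerLeft_psi hS v hE)
  have hg : partnerRight hT (psi v) = v.g := funext (partnerRight_psi hT v hE)
  refine CliqueVec.ext hf hg (funext fun ⟨a, b⟩ => ?_)
  by_cases hab : (a, b) ∈ E
  · rw [Bool.eq_iff_iff, ofMatching_s_eq_true_iff, v.s_eq_true_iff hab, hf, hg]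
    exact and_iff_right hab
  · rw [(ofMatching hS hT (psi v)).hs' _ hab, v.hs' _ hab]

variable {hS hT} {a b : ℕ}

lemma inl_mem_psi_ofMatching_iff (hE : E ⊆ Icc 1 n ×ˢ Icc 1 m) (hM : IsMatching E M) :
    Sum.inl (a, b) ∈ psi (ofMatching hS hT M) ↔ Sum.inl (a, b) ∈ M := by
  rw [inl_mem_psi_iff]
  constructor
  · rintro ⟨hab, hf, hg, hs⟩
    by_contra he
    simp [(ofMatching_s_eq_true_iff hS hT).2 ⟨hab, hf, hg, he⟩] at hs
  · intro he
    refine ⟨hM.1 _ he, partnerLeft_eq hS hE hM (Or.inl he),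
      partnerRight_eq hT hE hM (Or.inl he),
      Bool.eq_false_iff.2 fun hs => ((ofMatching_s_eq_true_iff hS hT).1 hs).2.2.2 he⟩

lemma inr_inl_mem_psi_ofMatching_iff (hE : E ⊆ Icc 1 n ×ˢ Icc 1 m) (hM : IsMatching E M) :
    Sum.inr (Sum.inl (a, b)) ∈ psi (ofMatching hS hT M) ↔ Sum.inr (Sum.inl (a, b)) ∈ M := by
  rw [inr_inl_mem_psi_iff _ hE]
  constructor
  · rintro ⟨hab, hf, ⟨j', hj', hlt⟩, hs⟩
    by_cases hc : ∃ j, CoversLeftVia M a j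
    · obtain ⟨j, hj⟩ := hc
      obtain rfl : j = b := (partnerLeft_eq hS hE hM hj).symm.trans hf
      refine hj.resolve_left fun he => ?_
      have hg := partnerRight_eq hT hE hM (Or.inl he)
      exact ((ofMatching_s_eq_true_iff hS hT).1 (hs hg)).2.2.2 he
    · have hmin : (ofMatching hS hT M).f a = (Nbr E a).min' _ :=
        partnerLeft_eq_min' hS ((mem_product.1 (hE hab)).1) (not_exists.1 hc)
      rw [← hf, hmin] at hlt
      exact absurd (min'_le _ _ hj') hlt.not_ge
  · intro he
    obtain ⟨hab, hlt⟩ := hM.1 _ he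
    have hf := partnerLeft_eq hS hE hM (Or.inr he)
    refine ⟨hab, hf, hlt, fun hg => (ofMatching_s_eq_true_iff hS hT).2 ⟨hab, hf, hg, fun he' => ?_⟩⟩
    simpa using (isMatching_iff.1 hM).2.1 _ he' _ he a rfl rfl

lemma inr_inr_mem_psi_ofMatching_iff (hE : E ⊆ Icc 1 n ×ˢ Icc 1 m) (hM : IsMatching E M) :
    Sum.inr (Sum.inr (b, a)) ∈ psi (ofMatching hS hT M) ↔ Sum.inr (Sum.inr (b, a)) ∈ M := by
  rw [inr_inr_mem_psi_iff _ hE]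
  constructor
  · rintro ⟨hab, hg, ⟨i', hi', hlt⟩, hs⟩
    by_cases hc : ∃ i, CoversRightVia M b i
    · obtain ⟨i, hi⟩ := hc
      obtain rfl : i = a := (partnerRight_eq hT hE hM hi).symm.trans hg
      refine hi.resolve_left fun he => ?_
      have hf := partnerLeft_eq hS hE hM (Or.inl he)
      exact ((ofMatching_s_eq_true_iff hS hT).1 (hs hf)).2.2.2 he
    · have hmax : (ofMatching hS hT M).g b = (Nbr' E b).max' _ :=
        partnerRight_eq_max' hT ((mem_product.1 (hE hab)).2) (not_exists.1 hc)
      rw [← hg, hmax] at hlt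
      exact absurd (le_max' _ _ hi') hlt.not_ge
  · intro he
    obtain ⟨hab, hlt⟩ := hM.1 _ he
    have hg := partnerRight_eq hT hE hM (Or.inr he)
    refine ⟨hab, hg, hlt, fun hf => (ofMatching_s_eq_true_iff hS hT).2 ⟨hab, hf, hg, fun he' => ?_⟩⟩
    simpa using (isMatching_iff.1 hM).2.2 _ he' _ he b rfl rfl

lemma psi_ofMatching (hE : E ⊆ Icc 1 n ×ˢ Icc 1 m) (hM : IsMatching E M) :
    psi (ofMatching hS hT M) = M := by
  ext (⟨a, b⟩ | ⟨a, b⟩ | ⟨b, a⟩)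
  exacts [inl_mem_psi_ofMatching_iff hE hM, inr_inl_mem_psi_ofMatching_iff hE hM,
    inr_inr_mem_psi_ofMatching_iff hE hM]

end CliqueVec

theorem psi_bijection_general (n m : ℕ) (E : Finset (ℕ × ℕ))
    (hE : ∀ p ∈ E, 1 ≤ p.1 ∧ p.1 ≤ n ∧ 1 ≤ p.2 ∧ p.2 ≤ m)
    (hdegS : ∀ i ∈ Finset.Icc 1 n, 2 ≤ (Nbr E i).card)
    (hdegT : ∀ j ∈ Finset.Icc 1 m, 2 ≤ (Nbr' E j).card) :
    (∀ v : CliqueVec n m E, IsMatching E (psi v)) ∧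
    Function.Injective (psi : CliqueVec n m E → Set WEdge) ∧
    (∀ M : Set WEdge, IsMatching E M → ∃ v : CliqueVec n m E, psi v = M) := by
  have hE' : E ⊆ Icc 1 n ×ˢ Icc 1 m := fun p hp => by
    simpa [and_assoc] using hE p hp
  have hS : ∀ i ∈ Icc 1 n, (Nbr E i).Nonempty := fun i hi =>
    card_pos.1 (zero_lt_two.trans_le (hdegS i hi))
  have hT : ∀ j ∈ Icc 1 m, (Nbr' E j).Nonempty := fun j hj =>
    card_pos.1 (zero_lt_two.trans_le (hdegT j hj))
  exact ⟨fun v => v.psi_isMatching hE',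
    Function.LeftInverse.injective (CliqueVec.ofMatching_psi hS hT · hE'),
    fun M hM => ⟨CliqueVec.ofMatching hS hT M, CliqueVec.psi_ofMatching hE' hM⟩⟩

/-- The matching map `ψ` is a bijection from clique vectors onto matchings of `W(H)`. -/
theorem psi_bijection (n m : ℕ) (hn : 1 ≤ n) (hm : 1 ≤ m) (E : Finset (ℕ × ℕ))
    (hE : ∀ p ∈ E, 1 ≤ p.1 ∧ p.1 ≤ n ∧ 1 ≤ p.2 ∧ p.2 ≤ m)
    (hdegS : ∀ i ∈ Finset.Icc 1 n, 2 ≤ (Nbr E i).card)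
    (hdegT : ∀ j ∈ Finset.Icc 1 m, 2 ≤ (Nbr' E j).card) :
    (∀ v : CliqueVec n m E, IsMatching E (psi v)) ∧
    Function.Injective (psi : CliqueVec n m E → Set WEdge) ∧
    (∀ M : Set WEdge, IsMatching E M → ∃ v : CliqueVec n m E, psi v = M) :=
  psi_bijection_general n m E hE hdegS hdegT
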